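/- Equilibrium condition for the elliptic Ruijsenaars–Schneider flows (Lemma 3 of the paper, identity w_m^{k} = 0): for every k with 1 ≤ k ≤ N and every m ∈ {1,…,N}, ∑_{I ⊆ {1,…,N}, |I| = k, m ∈ I} ( ∏_{i∈I, j∉I} φ(x_j − x_i) ) · ( ∑_{l ∉ I} g(x_l − x_m) ) = ∑_{I ⊆ {1,…,N}, |I| = k, m ∉ I} ( ∏_{i∈I, j∉I} φ(x_j − x_i) ) · ( ∑_{l ∈ I} g(x_m − x_l) ). -/

import Mathlib

/-!
Write `x_j = j / N`. Since `ϑ` is `1`-antiperiodic, `φ` and `g` are `1`-periodic, and the cyclic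
rotation `j ↦ j + 1` of `{1, …, N}` changes every difference `x_a - x_b` by an integer. Hence both
sides of the identity, as functions of `m`, are invariant under this rotation, so their difference
is independent of `m`. Summed over `m`, both sides become the sum over `I` and over pairs
`(a, b) ∈ I × Iᶜ` of the same terms, so this constant difference vanishes.
-/

open Complex Finset

/-- The odd theta function `ϑ(z|τ)`. -/
noncomputable def ϑ (τ : ℂ) (z : ℂ) : ℂ :=
  -∑' k : ℤ, Complex.exp (Real.pi * Complex.I * τ * ((k : ℂ) + 1 / 2) ^ 2
      + 2 * Real.pi * Complex.I * (z + 1 / 2) * ((k : ℂ) + 1 / 2))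

/-- The Kronecker elliptic function `φ(z) = ϑ'(0)·ϑ(z+ħ)/(ϑ(z)·ϑ(ħ))`. -/
noncomputable def φ₁ (τ hbar z : ℂ) : ℂ :=
  deriv (ϑ τ) 0 * ϑ τ (z + hbar) / (ϑ τ z * ϑ τ hbar)

/-- The first Eisenstein function `E₁(z) = ϑ'(z)/ϑ(z)`. -/
noncomputable def E₁ (τ z : ℂ) : ℂ := deriv (ϑ τ) z / ϑ τ z

/-- `g(x) = E₁(ħ+x) − E₁(x)`. -/
noncomputable def gfun (τ hbar x : ℂ) : ℂ := E₁ τ (hbar + x) - E₁ τ x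

open Function

theorem ϑ_antiperiodic (τ : ℂ) : Antiperiodic (ϑ τ) 1 := by
  intro z
  have hodd (A : ℂ) (k : ℤ) : exp (A + (k * (2 * Real.pi * I) + Real.pi * I)) = -exp A := by
    rw [exp_add, exp_add, exp_int_mul_two_pi_mul_I, exp_pi_mul_I]
    ring
  have hterm (k : ℤ) : exp (Real.pi * I * τ * ((k : ℂ) + 1 / 2) ^ 2
      + 2 * Real.pi * I * (z + 1 + 1 / 2) * ((k : ℂ) + 1 / 2))
      = -exp (Real.pi * I * τ * ((k : ℂ) + 1 / 2) ^ 2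
      + 2 * Real.pi * I * (z + 1 / 2) * ((k : ℂ) + 1 / 2)) := by
    rw [← hodd _ k]
    congr 1
    ring
  simp only [ϑ, hterm, tsum_neg]

theorem deriv_ϑ_antiperiodic (τ : ℂ) : Antiperiodic (deriv (ϑ τ)) 1 := fun z => by
  rw [← deriv_comp_add_const, (ϑ_antiperiodic τ).funext, deriv.neg']

theorem E₁_periodic (τ : ℂ) : Periodic (E₁ τ) 1 :=
  (deriv_ϑ_antiperiodic τ).div (ϑ_antiperiodic τ)

theorem gfun_periodic (τ hbar : ℂ) : Periodic (gfun τ hbar) 1 := fun x => by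
  simp only [gfun, ← add_assoc, E₁_periodic τ _]

theorem φ₁_periodic (τ hbar : ℂ) : Periodic (φ₁ τ hbar) 1 := fun z => by
  simp only [φ₁, add_right_comm z 1 hbar, ϑ_antiperiodic τ _, mul_neg, neg_mul, neg_div_neg_eq]

section PermPreserving

variable {α : Type*} {S : Finset α} {σ : Equiv.Perm α}

theorem Finset.map_perm_eq_self_of_forall_mem_iff (hσ : ∀ a, σ a ∈ S ↔ a ∈ S) :
    S.map σ.toEmbedding = S := by
  ext b
  rw [mem_map_equiv, ← hσ, Equiv.apply_symm_apply]

theorem Finset.map_perm_sdiff_of_forall_mem_iff [DecidableEq α] (hσ : ∀ a, σ a ∈ S ↔ a ∈ S)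
    (I : Finset α) : (S \ I).map σ.toEmbedding = S \ I.map σ.toEmbedding := by
  rw [map_sdiff, map_perm_eq_self_of_forall_mem_iff hσ]

theorem Finset.map_perm_mem_powersetCard_iff (hσ : ∀ a, σ a ∈ S ↔ a ∈ S) {k : ℕ}
    {I : Finset α} : I.map σ.toEmbedding ∈ S.powersetCard k ↔ I ∈ S.powersetCard k := by
  rw [mem_powersetCard, mem_powersetCard, card_map]
  nth_rw 1 [← map_perm_eq_self_of_forall_mem_iff hσ]
  rw [map_subset_map]

end PermPreserving

variable {α R : Type*} [DecidableEq α]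

def cutWeight [CommMonoid R] (S : Finset α) (Φ : α → α → R) (I : Finset α) : R :=
  ∏ i ∈ I, ∏ j ∈ S \ I, Φ j i

theorem cutWeight_map_perm [CommMonoid R] {S : Finset α} {σ : Equiv.Perm α}
    (hσ : ∀ a, σ a ∈ S ↔ a ∈ S) {Φ : α → α → R}
    (hΦ : ∀ a ∈ S, ∀ b ∈ S, Φ (σ a) (σ b) = Φ a b) {I : Finset α} (hI : I ⊆ S) :
    cutWeight S Φ (I.map σ.toEmbedding) = cutWeight S Φ I := by
  rw [cutWeight, cutWeight, ← map_perm_sdiff_of_forall_mem_iff hσ, prod_map]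
  refine prod_congr rfl fun i hi => ?_
  rw [prod_map]
  exact prod_congr rfl fun j hj => hΦ j (mem_sdiff.1 hj).1 i (hI hi)

section Flow

variable [CommSemiring R] (S : Finset α) (k : ℕ) (w : Finset α → R) (G : α → α → R)

def outFlow (m : α) : R :=
  ∑ I ∈ (S.powersetCard k).filter (m ∈ ·), w I * ∑ l ∈ S \ I, G l m

def inFlow (m : α) : R :=
  ∑ I ∈ (S.powersetCard k).filter (m ∉ ·), w I * ∑ l ∈ I, G m l

theorem sum_outFlow_eq_sum_inFlow :
    ∑ m ∈ S, outFlow S k w G m = ∑ m ∈ S, inFlow S k w G m := by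
  have hout : ∑ m ∈ S, outFlow S k w G m
      = ∑ I ∈ S.powersetCard k, w I * ∑ m ∈ I, ∑ l ∈ S \ I, G l m := by
    simp only [outFlow, sum_filter]
    rw [sum_comm]
    refine sum_congr rfl fun I hI => ?_
    rw [← sum_filter, filter_mem_eq_inter, inter_eq_right.2 (mem_powersetCard.1 hI).1, mul_sum]
  have hin : ∑ m ∈ S, inFlow S k w G m
      = ∑ I ∈ S.powersetCard k, w I * ∑ m ∈ S \ I, ∑ l ∈ I, G m l := by
    simp only [inFlow, sum_filter]
    rw [sum_comm]
    refine sum_congr rfl fun I _ => ?_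
    rw [← sum_filter, ← sdiff_eq_filter, mul_sum]
  rw [hout, hin]
  exact sum_congr rfl fun I _ => by rw [sum_comm]

section Symmetry

variable {S k w G} {σ : Equiv.Perm α} (hσ : ∀ a, σ a ∈ S ↔ a ∈ S)
  (hw : ∀ I ⊆ S, w (I.map σ.toEmbedding) = w I)
  (hG : ∀ a ∈ S, ∀ b ∈ S, G (σ a) (σ b) = G a b)
include hσ hw hG

theorem outFlow_perm_apply {m : α} (hm : m ∈ S) :
    outFlow S k w G (σ m) = outFlow S k w G m := by
  refine (sum_equiv σ.finsetCongr (fun I => ?_) fun I hI => ?_).symm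
  · simp only [Equiv.finsetCongr_apply, mem_filter, map_perm_mem_powersetCard_iff hσ,
      mem_map_equiv, Equiv.symm_apply_apply]
  · have hIS := (mem_powersetCard.1 (mem_filter.1 hI).1).1
    rw [Equiv.finsetCongr_apply, hw I hIS, ← map_perm_sdiff_of_forall_mem_iff hσ, sum_map]
    exact congrArg _ (sum_congr rfl fun l hl => (hG l (mem_sdiff.1 hl).1 m hm).symm)

theorem inFlow_perm_apply {m : α} (hm : m ∈ S) :
    inFlow S k w G (σ m) = inFlow S k w G m := by
  refine (sum_equiv σ.finsetCongr (fun I => ?_) fun I hI => ?_).symm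
  · simp only [Equiv.finsetCongr_apply, mem_filter, map_perm_mem_powersetCard_iff hσ,
      mem_map_equiv, Equiv.symm_apply_apply]
  · have hIS := (mem_powersetCard.1 (mem_filter.1 hI).1).1
    rw [Equiv.finsetCongr_apply, hw I hIS, sum_map]
    exact congrArg _ (sum_congr rfl fun l hl => (hG m hm l (hIS hl)).symm)

end Symmetry

end Flow

theorem outFlow_eq_inFlow_of_forall_sub_eq [CommRing R] [IsDomain R] [CharZero R]
    (S : Finset α) (k : ℕ) (w : Finset α → R) (G : α → α → R)
    (hconst : ∀ a ∈ S, ∀ b ∈ S,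
      outFlow S k w G a - inFlow S k w G a = outFlow S k w G b - inFlow S k w G b)
    {m : α} (hm : m ∈ S) : outFlow S k w G m = inFlow S k w G m := by
  have hsum := sum_outFlow_eq_sum_inFlow S k w G
  rw [← sub_eq_zero, ← sum_sub_distrib, sum_congr rfl fun a ha => hconst a ha m hm,
    sum_const, nsmul_eq_mul, mul_eq_zero, Nat.cast_eq_zero, card_eq_zero] at hsum
  exact sub_eq_zero.1 (hsum.resolve_left (ne_empty_of_mem hm))

def cycleIcc (N : ℕ) : Equiv.Perm ℕ where
  toFun j := if 1 ≤ j ∧ j < N then j + 1 else if j = N ∧ 1 ≤ N then 1 else j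
  invFun j := if 1 < j ∧ j ≤ N then j - 1 else if j = 1 ∧ 1 ≤ N then N else j
  left_inv j := by dsimp only; split_ifs <;> omega
  right_inv j := by dsimp only; split_ifs <;> omega

theorem cycleIcc_mem_Icc_iff (N j : ℕ) : cycleIcc N j ∈ Icc 1 N ↔ j ∈ Icc 1 N := by
  simp only [cycleIcc, Equiv.coe_fn_mk, mem_Icc]
  split_ifs <;> omega

theorem cycleIcc_apply_of_lt {N j : ℕ} (hj : 1 ≤ j) (hjN : j < N) : cycleIcc N j = j + 1 :=
  if_pos ⟨hj, hjN⟩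

theorem exists_cycleIcc_eq_add_one_add_mul {N j : ℕ} (hj : j ∈ Icc 1 N) :
    ∃ n : ℤ, (cycleIcc N j : ℤ) = j + 1 + n * N := by
  rw [mem_Icc] at hj
  simp only [cycleIcc, Equiv.coe_fn_mk]
  split_ifs
  · exact ⟨0, by push_cast; ring⟩
  · exact ⟨-1, by push_cast; omega⟩
  · omega

theorem Function.Periodic.apply_div_sub_div_cycleIcc {K β : Type*} [Field K] [CharZero K]
    {f : K → β} (hf : Periodic f 1) {N a b : ℕ} (ha : a ∈ Icc 1 N) (hb : b ∈ Icc 1 N) :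
    f ((cycleIcc N a : K) / N - (cycleIcc N b : K) / N) = f ((a : K) / N - (b : K) / N) := by
  obtain ⟨na, hna⟩ := exists_cycleIcc_eq_add_one_add_mul ha
  obtain ⟨nb, hnb⟩ := exists_cycleIcc_eq_add_one_add_mul hb
  have hN : (N : K) ≠ 0 := Nat.cast_ne_zero.2 (by rw [mem_Icc] at ha; omega)
  have hshift : (cycleIcc N a : K) / N - (cycleIcc N b : K) / N
      = (a : K) / N - (b : K) / N + ((na - nb : ℤ) : K) * 1 := by
    rw [← Int.cast_natCast (cycleIcc N a), ← Int.cast_natCast (cycleIcc N b), hna, hnb]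
    push_cast
    field_simp
    ring
  rw [hshift, hf.int_mul _ _]

theorem eq_of_forall_apply_cycleIcc_eq {β : Type*} {N : ℕ} {D : ℕ → β}
    (hD : ∀ j ∈ Icc 1 N, D (cycleIcc N j) = D j) {a : ℕ} (ha : a ∈ Icc 1 N) : D a = D 1 := by
  obtain ⟨ha1, haN⟩ := mem_Icc.1 ha
  induction a, ha1 using Nat.le_induction with
  | base => rfl
  | succ j hj ih =>
    rw [← cycleIcc_apply_of_lt hj haN, hD j (mem_Icc.2 ⟨hj, by omega⟩),
      ih (mem_Icc.2 ⟨hj, by omega⟩) (by omega)]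

theorem equilibrium_condition_general (τ : ℂ) (hbar : ℂ) (N : ℕ)
    (k : ℕ) (m : ℕ) (hm : m ∈ Finset.Icc 1 N) :
    ∑ I ∈ ((Finset.Icc 1 N).powersetCard k).filter (fun I => m ∈ I),
      (∏ i ∈ I, ∏ j ∈ Finset.Icc 1 N \ I, φ₁ τ hbar ((j : ℂ) / N - (i : ℂ) / N)) *
        (∑ l ∈ Finset.Icc 1 N \ I, gfun τ hbar ((l : ℂ) / N - (m : ℂ) / N))
    = ∑ I ∈ ((Finset.Icc 1 N).powersetCard k).filter (fun I => m ∉ I),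
        (∏ i ∈ I, ∏ j ∈ Finset.Icc 1 N \ I, φ₁ τ hbar ((j : ℂ) / N - (i : ℂ) / N)) *
          (∑ l ∈ I, gfun τ hbar ((m : ℂ) / N - (l : ℂ) / N)) := by
  set S := Icc 1 N
  set w := cutWeight S fun a b : ℕ => φ₁ τ hbar ((a : ℂ) / N - (b : ℂ) / N)
  set G := fun a b : ℕ => gfun τ hbar ((a : ℂ) / N - (b : ℂ) / N)
  have hρ : ∀ j, cycleIcc N j ∈ S ↔ j ∈ S := cycleIcc_mem_Icc_iff N
  have hw : ∀ I ⊆ S, w (I.map (cycleIcc N).toEmbedding) = w I := fun I hI =>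
    cutWeight_map_perm hρ
      (fun a ha b hb => (φ₁_periodic τ hbar).apply_div_sub_div_cycleIcc ha hb) hI
  have hG : ∀ a ∈ S, ∀ b ∈ S, G (cycleIcc N a) (cycleIcc N b) = G a b := fun a ha b hb =>
    (gfun_periodic τ hbar).apply_div_sub_div_cycleIcc ha hb
  set D := fun j => outFlow S k w G j - inFlow S k w G j
  have hD : ∀ j ∈ S, D (cycleIcc N j) = D j := fun j hj => by
    simp only [D, outFlow_perm_apply hρ hw hG hj, inFlow_perm_apply hρ hw hG hj]
  exact outFlow_eq_inFlow_of_forall_sub_eq S k w G (fun a ha b hb =>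
    (eq_of_forall_apply_cycleIcc_eq hD ha).trans (eq_of_forall_apply_cycleIcc_eq hD hb).symm) hm

/-- Lemma 3 of the paper: equilibrium condition `w_m^{k} = 0` for the elliptic
Ruijsenaars–Schneider flows. -/
theorem equilibrium_condition (τ : ℂ) (hτ : 0 < τ.im) (hbar : ℂ) (N : ℕ) (hN : 0 < N)
    (k : ℕ) (hk1 : 1 ≤ k) (hkN : k ≤ N) (m : ℕ) (hm : m ∈ Finset.Icc 1 N) :
    ∑ I ∈ ((Finset.Icc 1 N).powersetCard k).filter (fun I => m ∈ I),
      (∏ i ∈ I, ∏ j ∈ Finset.Icc 1 N \ I, φ₁ τ hbar ((j : ℂ) / N - (i : ℂ) / N)) *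
        (∑ l ∈ Finset.Icc 1 N \ I, gfun τ hbar ((l : ℂ) / N - (m : ℂ) / N))
    = ∑ I ∈ ((Finset.Icc 1 N).powersetCard k).filter (fun I => m ∉ I),
        (∏ i ∈ I, ∏ j ∈ Finset.Icc 1 N \ I, φ₁ τ hbar ((j : ℂ) / N - (i : ℂ) / N)) *
          (∑ l ∈ I, gfun τ hbar ((m : ℂ) / N - (l : ℂ) / N)) :=
  equilibrium_condition_general τ hbar N k m hm
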